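/- Let M ∈ ℝ^{n×n} be a Z-matrix and p ∈ ℝⁿ with p > 0 such that the system Mᵀu = p − slack is feasible: concretely, suppose [Mᵀ | I] y = p has a feasible solution y ≥ 0 and M is a K-matrix. Then every feasible basic solution of [Mᵀ|I]y = p, y ≥ 0 corresponding to a complementary basis B satisfies ([Mᵀ|I]_B)⁻¹ p > 0; i.e., every complementary basis is a nondegenerate feasible basis. -/

import Mathlib

open Matrix

/-- A square real matrix is a P-matrix if all of its principal minors are positive. -/
def IsPMat {n : ℕ} (M : Matrix (Fin n) (Fin n) ℝ) : Prop :=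
  ∀ S : Finset (Fin n),
    0 < (M.submatrix (Subtype.val : {i // i ∈ S} → Fin n) Subtype.val).det

/-- A Z-matrix has nonpositive off-diagonal entries. -/
def IsZMat {n : ℕ} (M : Matrix (Fin n) (Fin n) ℝ) : Prop :=
  ∀ i j, i ≠ j → M i j ≤ 0

/-- The representative (complementary) submatrix of `[Mᵀ | I]` determined by a
choice `ε`: column `j` is column `j` of `Mᵀ` if `ε j` is true, and column `j` of
the identity otherwise. -/
def repSub {n : ℕ} (M : Matrix (Fin n) (Fin n) ℝ) (ε : Fin n → Bool) :
    Matrix (Fin n) (Fin n) ℝ :=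
  Matrix.of fun i j => if ε j then Mᵀ i j else (1 : Matrix (Fin n) (Fin n) ℝ) i j

/-!
Each complementary matrix `C = repSub M ε` is a Z-matrix, and it is block triangular with an
identity block and the block `Mᵀ` on `{j | ε j}`, so each of its principal minors is a principal
minor of `M`: `C` is again a K-matrix. For a K-matrix `A` and `q > 0`, eliminating the pivot
`A 0 0 > 0` leaves a Schur complement that is again a K-matrix, with a right-hand side that stays
positive because the off-diagonal signs only add to it. By induction `A x = q` has a solution
`x > 0`; for `A = C` and `q = p` this solution is `C⁻¹ p`.
-/

section SchurComplement

variable {K : Type*} [Field K] {N : ℕ}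

def schurComplZero (A : Matrix (Fin (N + 1)) (Fin (N + 1)) K) : Matrix (Fin N) (Fin N) K :=
  of fun i j => A i.succ j.succ - A i.succ 0 * A 0 j.succ / A 0 0

theorem det_eq_mul_det_schurComplZero (A : Matrix (Fin (N + 1)) (Fin (N + 1)) K)
    (ha : A 0 0 ≠ 0) : A.det = A 0 0 * (schurComplZero A).det := by
  let c : Fin (N + 1) → K := Fin.cons 0 fun i => -(A i.succ 0 / A 0 0)
  let C : Matrix (Fin (N + 1)) (Fin (N + 1)) K := of fun i j => A i j + c i * A 0 j
  have hCA : C.det = A.det := det_eq_of_forall_row_eq_smul_add_const c 0 rfl fun _ _ => rfl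
  have hC_col : ∀ i : Fin N, C i.succ 0 = 0 := fun i => by
    simp only [C, c, of_apply, Fin.cons_succ]
    field_simp
    ring
  have hC_succ : C.submatrix Fin.succ Fin.succ = schurComplZero A := by
    ext i j
    simp only [C, c, schurComplZero, submatrix_apply, of_apply, Fin.cons_succ]
    ring
  rw [← hCA, det_succ_column_zero, Fin.sum_univ_succ]
  simp only [hC_col, mul_zero, zero_mul, Finset.sum_const_zero, add_zero, Fin.val_zero,
    pow_zero, one_mul, Fin.succAbove_zero, hC_succ]
  simp [C, c]

theorem mulVec_cons_eq_of_schurComplZero_mulVec_eq (A : Matrix (Fin (N + 1)) (Fin (N + 1)) K)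
    {q : Fin (N + 1) → K} {x : Fin N → K}
    (hx : schurComplZero A *ᵥ x = fun i => q i.succ - A i.succ 0 * q 0 / A 0 0)
    (ha : A 0 0 ≠ 0) :
    A *ᵥ Fin.cons ((q 0 - ∑ j, A 0 j.succ * x j) / A 0 0) x = q := by
  funext i
  cases i using Fin.cases with
  | zero =>
    simp only [mulVec, dotProduct, Fin.sum_univ_succ, Fin.cons_zero, Fin.cons_succ]
    field_simp
    ring
  | succ i =>
    have hi := congrFun hx i
    have hS : ∑ j, A i.succ 0 * A 0 j.succ / A 0 0 * x j
        = A i.succ 0 / A 0 0 * ∑ j, A 0 j.succ * x j := by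
      rw [Finset.mul_sum]
      exact Finset.sum_congr rfl fun j _ => by ring
    simp only [schurComplZero, mulVec, dotProduct, of_apply, sub_mul,
      Finset.sum_sub_distrib, hS] at hi
    simp only [mulVec, dotProduct, Fin.sum_univ_succ, Fin.cons_zero, Fin.cons_succ]
    linear_combination hi

end SchurComplement

/-- `IsPMat` with principal submatrices indexed by injective maps `Fin m → Fin N` rather than by
finsets, the form in which the Schur-complement induction can use it. -/
def HasPosPrincipalMinors {N : ℕ} (A : Matrix (Fin N) (Fin N) ℝ) : Prop :=
  ∀ (m : ℕ) (f : Fin m → Fin N), Function.Injective f → 0 < (A.submatrix f f).det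

theorem IsPMat.hasPosPrincipalMinors {N : ℕ} {A : Matrix (Fin N) (Fin N) ℝ} (hA : IsPMat A) :
    HasPosPrincipalMinors A := by
  intro m f hf
  let e : Fin m ≃ {i // i ∈ (Set.range f).toFinset} :=
    (Equiv.ofInjective f hf).trans (Equiv.subtypeEquivRight fun _ => Set.mem_toFinset.symm)
  have h : A.submatrix f f = (A.submatrix Subtype.val Subtype.val).submatrix e e := rfl
  rw [h, det_submatrix_equiv_self]
  exact hA _

namespace HasPosPrincipalMinors

variable {N : ℕ} {A : Matrix (Fin N) (Fin N) ℝ}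

theorem det_submatrix_pos (hA : HasPosPrincipalMinors A) {ι : Type*} [Fintype ι]
    [DecidableEq ι] (g : ι → Fin N) (hg : Function.Injective g) :
    0 < (A.submatrix g g).det := by
  let e := Fintype.equivFin ι
  have h : A.submatrix g g = (A.submatrix (g ∘ e.symm) (g ∘ e.symm)).submatrix e e := by
    ext i j
    simp
  rw [h, det_submatrix_equiv_self]
  exact hA _ _ (hg.comp e.symm.injective)

theorem det_pos (hA : HasPosPrincipalMinors A) : 0 < A.det := by
  simpa using hA N id Function.injective_id

end HasPosPrincipalMinors

theorem HasPosPrincipalMinors.zero_zero_pos {N : ℕ}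
    {A : Matrix (Fin (N + 1)) (Fin (N + 1)) ℝ} (hA : HasPosPrincipalMinors A) : 0 < A 0 0 := by
  simpa using hA 1 (fun _ => 0) (Function.injective_of_subsingleton _)

theorem IsZMat.schurComplZero {N : ℕ} {A : Matrix (Fin (N + 1)) (Fin (N + 1)) ℝ}
    (hZ : IsZMat A) (ha : 0 < A 0 0) : IsZMat (schurComplZero A) := by
  intro i j hij
  have hentry : A i.succ j.succ ≤ 0 := hZ _ _ (Fin.succ_injective _ |>.ne hij)
  have hcol : A i.succ 0 ≤ 0 := hZ _ _ (Fin.succ_ne_zero i)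
  have hrow : A 0 j.succ ≤ 0 := hZ _ _ (Fin.succ_ne_zero j).symm
  have hcorr : 0 ≤ A i.succ 0 * A 0 j.succ / A 0 0 :=
    div_nonneg (mul_nonneg_of_nonpos_of_nonpos hcol hrow) ha.le
  simp only [_root_.schurComplZero, of_apply]
  linarith

theorem HasPosPrincipalMinors.schurComplZero {N : ℕ}
    {A : Matrix (Fin (N + 1)) (Fin (N + 1)) ℝ} (hA : HasPosPrincipalMinors A) :
    HasPosPrincipalMinors (schurComplZero A) := by
  intro m f hf
  let g : Fin (m + 1) → Fin (N + 1) := Fin.cons 0 (Fin.succ ∘ f)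
  have hg : Function.Injective g := Fin.cons_injective_iff.mpr
    ⟨fun ⟨i, hi⟩ => Fin.succ_ne_zero _ hi, (Fin.succ_injective N).comp hf⟩
  have hcompl : _root_.schurComplZero (A.submatrix g g)
      = (_root_.schurComplZero A).submatrix f f := by
    ext i j
    simp [_root_.schurComplZero, g]
  have hdet := det_eq_mul_det_schurComplZero (A.submatrix g g) hA.zero_zero_pos.ne'
  rw [hcompl] at hdet
  exact pos_of_mul_pos_right (hdet ▸ hA _ g hg) hA.zero_zero_pos.le

theorem exists_pos_mulVec_eq {N : ℕ} {A : Matrix (Fin N) (Fin N) ℝ} (hZ : IsZMat A)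
    (hA : HasPosPrincipalMinors A) {q : Fin N → ℝ} (hq : ∀ i, 0 < q i) :
    ∃ x, A *ᵥ x = q ∧ ∀ i, 0 < x i := by
  induction N with
  | zero => exact ⟨0, Subsingleton.elim _ _, fun i => i.elim0⟩
  | succ N ih =>
    have ha := hA.zero_zero_pos
    have hq' : ∀ i : Fin N, 0 < q i.succ - A i.succ 0 * q 0 / A 0 0 := fun i => by
      have : A i.succ 0 * q 0 / A 0 0 ≤ 0 :=
        div_nonpos_of_nonpos_of_nonneg
          (mul_nonpos_of_nonpos_of_nonneg (hZ _ _ (Fin.succ_ne_zero i)) (hq 0).le) ha.le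
      linarith [hq i.succ]
    obtain ⟨x, hx, hx_pos⟩ := ih (hZ.schurComplZero ha) hA.schurComplZero hq'
    have hS : ∑ j, A 0 j.succ * x j ≤ 0 := Finset.sum_nonpos fun j _ =>
      mul_nonpos_of_nonpos_of_nonneg (hZ _ _ (Fin.succ_ne_zero j).symm) (hx_pos j).le
    refine ⟨_, mulVec_cons_eq_of_schurComplZero_mulVec_eq A hx ha.ne', fun i => ?_⟩
    cases i using Fin.cases with
    | zero => exact div_pos (by linarith [hq 0]) ha
    | succ i => exact hx_pos i

theorem IsZMat.repSub {n : ℕ} {M : Matrix (Fin n) (Fin n) ℝ} (hZ : IsZMat M)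
    (ε : Fin n → Bool) : IsZMat (repSub M ε) := by
  intro i j hij
  simp only [_root_.repSub, of_apply]
  split_ifs
  · exact hZ j i hij.symm
  · exact (one_apply_ne hij).le

theorem repSub_submatrix {n m : ℕ} (M : Matrix (Fin n) (Fin n) ℝ) (ε : Fin n → Bool)
    {f : Fin m → Fin n} (hf : Function.Injective f) :
    (repSub M ε).submatrix f f = repSub (M.submatrix f f) (ε ∘ f) := by
  ext i j
  simp [repSub, one_apply, hf.eq_iff]

theorem blockTriangular_repSub {n : ℕ} (M : Matrix (Fin n) (Fin n) ℝ) (ε : Fin n → Bool) :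
    BlockTriangular (repSub M ε) ε := by
  intro i j hij
  have hj : ε j = false := by simp_all [Bool.lt_iff]
  have hi : ε i = true := by simp_all [Bool.lt_iff]
  have hne : i ≠ j := by rintro rfl; simp [hi] at hj
  simp [repSub, hj, one_apply_ne hne]

theorem det_repSub {n : ℕ} (M : Matrix (Fin n) (Fin n) ℝ) (ε : Fin n → Bool) :
    (repSub M ε).det
      = (M.submatrix (Subtype.val : {i // ε i = true} → Fin n) Subtype.val).det := by
  rw [(blockTriangular_repSub M ε).det_fintype, Fintype.prod_bool]
  have h_false : (repSub M ε).toSquareBlock ε false = 1 := by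
    ext i j
    simp [toSquareBlock, toSquareBlockProp, repSub, one_apply, j.2, Subtype.ext_iff]
  have h_true :
      (repSub M ε).toSquareBlock ε true = (M.submatrix Subtype.val Subtype.val)ᵀ := by
    ext i j
    simp [toSquareBlock, toSquareBlockProp, repSub, j.2]
  rw [h_false, h_true, det_one, mul_one, det_transpose]

theorem HasPosPrincipalMinors.repSub {n : ℕ} {M : Matrix (Fin n) (Fin n) ℝ}
    (hM : HasPosPrincipalMinors M) (ε : Fin n → Bool) :
    HasPosPrincipalMinors (repSub M ε) := by
  intro m f hf
  rw [repSub_submatrix M ε hf, det_repSub, submatrix_submatrix]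
  exact hM.det_submatrix_pos _ (hf.comp Subtype.val_injective)

theorem kMatrix_all_complementary_bases_feasible_general {n : ℕ}
    (M : Matrix (Fin n) (Fin n) ℝ) (hZ : IsZMat M) (hP : IsPMat M)
    (p : Fin n → ℝ) (hp : ∀ i, 0 < p i) :
    ∀ ε : Fin n → Bool, IsUnit (repSub M ε).det ∧
      ∀ i, 0 < ((repSub M ε)⁻¹.mulVec p) i := by
  intro ε
  have hK := hP.hasPosPrincipalMinors.repSub ε
  have hunit : IsUnit (repSub M ε).det := hK.det_pos.ne'.isUnit
  obtain ⟨x, hx, hx_pos⟩ := exists_pos_mulVec_eq (hZ.repSub ε) hK hp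
  refine ⟨hunit, ?_⟩
  rwa [← hx, mulVec_mulVec, nonsing_inv_mul _ hunit, one_mulVec]

theorem kMatrix_all_complementary_bases_feasible {n : ℕ}
    (M : Matrix (Fin n) (Fin n) ℝ) (hZ : IsZMat M) (hP : IsPMat M)
    (p : Fin n → ℝ) (hp : ∀ i, 0 < p i)
    (hfeas : ∃ y₁ y₂ : Fin n → ℝ, (∀ i, 0 ≤ y₁ i) ∧ (∀ i, 0 ≤ y₂ i) ∧
      Mᵀ.mulVec y₁ + y₂ = p) :
    ∀ ε : Fin n → Bool, IsUnit (repSub M ε).det ∧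
      ∀ i, 0 < ((repSub M ε)⁻¹.mulVec p) i :=
  kMatrix_all_complementary_bases_feasible_general M hZ hP p hp
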